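/- Let A be an n×n Hermitian positive-definite matrix with largest eigenvalue λmax, 0 < α < 1, t ≥ 0, w > 0, b, x̃ ∈ ℂⁿ, and ε > 0, m ≥ 1. If the residual r = b − (t^{1/α} I + A) x̃ satisfies ‖r‖₂ ≤ (ε/(2m)) · (απ/sin(απ)) · (1 + t^{1/α}/λmax)/w, then ‖(sin(απ)/(απ)) w A (t^{1/α}I + A)⁻¹ b − (sin(απ)/(απ)) w A x̃‖₂ ≤ ε/(2m). -/

import Mathlib

/-!
Write `B = t^{1/α} I + A` and `r = b - B x̃`. Then `A B⁻¹ b - A x̃ = A B⁻¹ r`, and `A B⁻¹` is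
diagonal in an orthonormal eigenbasis of `A`, with eigenvalues `λ / (t^{1/α} + λ)`. These increase
with `λ`, so the spectral norm of `A B⁻¹` is at most `λmax / (t^{1/α} + λmax)`, which is exactly the
reciprocal of the factor `1 + t^{1/α} / λmax` in the residual tolerance; the quadrature weight
`sin(απ) w / (απ)` cancels against its reciprocal there in the same way.
-/

open Matrix
open scoped ComplexOrder

theorem OrthonormalBasis.norm_apply_le_of_apply_eq_smul {𝕜 E ι : Type*} [RCLike 𝕜]
    [NormedAddCommGroup E] [InnerProductSpace 𝕜 E] [Fintype ι]
    (e : OrthonormalBasis ι 𝕜 E) {T : E →ₗ[𝕜] E} {μ : ι → 𝕜} (hT : ∀ j, T (e j) = μ j • e j)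
    {c : ℝ} (hμ : ∀ j, ‖μ j‖ ≤ c) (v : E) : ‖T v‖ ≤ c * ‖v‖ := by
  rcases isEmpty_or_nonempty ι with hι | ⟨⟨i⟩⟩
  · rw [← e.sum_repr v]
    simp
  have hc : 0 ≤ c := (norm_nonneg _).trans (hμ i)
  have hTv : T v = e.repr.symm (WithLp.toLp 2 fun j ↦ μ j * e.repr v j) := by
    conv_lhs => rw [← e.sum_repr v]
    simp [← e.sum_repr_symm, hT, smul_smul, mul_comm]
  rw [hTv, LinearIsometryEquiv.norm_map, ← e.repr.norm_map v, EuclideanSpace.norm_eq,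
    EuclideanSpace.norm_eq, ← Real.sqrt_sq hc, ← Real.sqrt_mul (sq_nonneg c), Finset.mul_sum]
  gcongr with j
  simp only [norm_mul, mul_pow]
  gcongr
  exact hμ j

theorem Matrix.inv_mulVec_eq_inv_smul {K n : Type*} [Field K] [Fintype n] [DecidableEq n]
    {B : Matrix n n K} (hB : IsUnit B) {μ : K} {v : n → K} (h : B *ᵥ v = μ • v) :
    B⁻¹ *ᵥ v = μ⁻¹ • v := by
  have hv : v = B⁻¹ *ᵥ (μ • v) := by
    rw [← h, mulVec_mulVec, nonsing_inv_mul _ ((isUnit_iff_isUnit_det B).mp hB), one_mulVec]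
  rcases eq_or_ne μ 0 with rfl | hμ
  · rw [zero_smul, mulVec_zero] at hv
    simp [hv]
  · rw [mulVec_smul] at hv
    rw [eq_inv_smul_iff₀ hμ, ← hv]

theorem Matrix.toEuclideanLin_mul_inv_sub {𝕜 n : Type*} [RCLike 𝕜] [Fintype n] [DecidableEq n]
    (A : Matrix n n 𝕜) {B : Matrix n n 𝕜} (hB : IsUnit B) (b x : EuclideanSpace 𝕜 n) :
    toEuclideanLin (A * B⁻¹) b - toEuclideanLin A x =
      toEuclideanLin (A * B⁻¹) (b - toEuclideanLin B x) := by
  rw [map_sub, ← LinearMap.comp_apply, ← toLpLin_mul_same, mul_assoc,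
    nonsing_inv_mul _ ((isUnit_iff_isUnit_det B).mp hB), mul_one]

theorem Matrix.IsHermitian.toEuclideanLin_mul_inv_smul_one_add_eigenvectorBasis
    {𝕜 n : Type*} [RCLike 𝕜] [Fintype n] [DecidableEq n] {A : Matrix n n 𝕜}
    (hA : A.IsHermitian) {s : ℝ} (hB : IsUnit ((s : 𝕜) • 1 + A)) (j : n) :
    toEuclideanLin (A * ((s : 𝕜) • 1 + A)⁻¹) (hA.eigenvectorBasis j) =
      ((hA.eigenvalues j / (s + hA.eigenvalues j) : ℝ) : 𝕜) • hA.eigenvectorBasis j := by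
  have hAv : A *ᵥ ⇑(hA.eigenvectorBasis j) =
      (hA.eigenvalues j : 𝕜) • ⇑(hA.eigenvectorBasis j) := by
    rw [hA.mulVec_eigenvectorBasis, RCLike.real_smul_eq_coe_smul (K := 𝕜)]
  have hBv : ((s : 𝕜) • 1 + A) *ᵥ ⇑(hA.eigenvectorBasis j) =
      (s + hA.eigenvalues j : 𝕜) • ⇑(hA.eigenvectorBasis j) := by
    rw [add_mulVec, smul_mulVec, one_mulVec, hAv, add_smul]
  apply WithLp.ofLp_injective
  rw [ofLp_toLpLin, toLin'_apply, ← mulVec_mulVec, inv_mulVec_eq_inv_smul hB hBv, mulVec_smul,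
    hAv, smul_smul, WithLp.ofLp_smul]
  push_cast
  rw [inv_mul_eq_div]

theorem Matrix.PosDef.ofReal_smul_one_add {𝕜 n : Type*} [RCLike 𝕜] [Fintype n] [DecidableEq n]
    {A : Matrix n n 𝕜} (hA : A.PosDef) {s : ℝ} (hs : 0 ≤ s) : ((s : 𝕜) • 1 + A).PosDef :=
  PosDef.posSemidef_add (PosSemidef.one.smul (RCLike.ofReal_nonneg.mpr hs)) hA

theorem Matrix.PosDef.norm_toEuclideanLin_mul_inv_smul_one_add_le
    {𝕜 n : Type*} [RCLike 𝕜] [Fintype n] [DecidableEq n] {A : Matrix n n 𝕜}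
    (hA : A.PosDef) {s : ℝ} (hs : 0 ≤ s) {lam : ℝ}
    (hmax : ∀ i, hA.isHermitian.eigenvalues i ≤ lam) (v : EuclideanSpace 𝕜 n) :
    ‖toEuclideanLin (A * ((s : 𝕜) • 1 + A)⁻¹) v‖ ≤ lam / (s + lam) * ‖v‖ := by
  have hB : IsUnit ((s : 𝕜) • 1 + A) := (hA.ofReal_smul_one_add hs).isUnit
  refine hA.isHermitian.eigenvectorBasis.norm_apply_le_of_apply_eq_smul
    (hA.isHermitian.toEuclideanLin_mul_inv_smul_one_add_eigenvectorBasis hB) (fun j ↦ ?_) v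
  have hpos := hA.eigenvalues_pos j
  rw [RCLike.norm_ofReal, abs_of_pos (by positivity),
    div_le_div_iff₀ (by positivity) (by linarith [hmax j])]
  nlinarith [hmax j]

theorem stmt15_general {n m : ℕ} (A : Matrix (Fin n) (Fin n) ℂ) (hA : A.PosDef)
    (lammax : ℝ)
    (hmax : ∀ i, hA.isHermitian.eigenvalues i ≤ lammax)
    (hmem : ∃ i, hA.isHermitian.eigenvalues i = lammax)
    (α : ℝ) (hα : 0 < α) (hα1 : α < 1)
    (t w : ℝ) (ht : 0 ≤ t) (hw : 0 < w)
    (b x' : EuclideanSpace ℂ (Fin n)) (ε : ℝ)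
    (hres : ‖b - Matrix.toEuclideanLin
        (((t ^ (1/α) : ℝ) : ℂ) • (1 : Matrix (Fin n) (Fin n) ℂ) + A) x'‖ ≤
      (ε / (2 * m)) * ((α * Real.pi) / Real.sin (α * Real.pi)) *
        ((1 + t ^ (1/α) / lammax) / w)) :
    ‖(Real.sin (α * Real.pi) / (α * Real.pi) * w) •
          Matrix.toEuclideanLin
            (A * (((t ^ (1/α) : ℝ) : ℂ) • (1 : Matrix (Fin n) (Fin n) ℂ) + A)⁻¹) b
        - (Real.sin (α * Real.pi) / (α * Real.pi) * w) • Matrix.toEuclideanLin A x'‖ ≤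
      ε / (2 * m) := by
  set s := t ^ (1 / α)
  set B : Matrix (Fin n) (Fin n) ℂ := (s : ℂ) • 1 + A
  set k := Real.sin (α * Real.pi) / (α * Real.pi) * w
  have hs : 0 ≤ s := Real.rpow_nonneg ht _
  have hB : IsUnit B := (hA.ofReal_smul_one_add hs).isUnit
  have hlam : 0 < lammax := by
    obtain ⟨i, rfl⟩ := hmem
    exact hA.eigenvalues_pos i
  have hsin : 0 < Real.sin (α * Real.pi) :=
    Real.sin_pos_of_pos_of_lt_pi (by positivity) (by nlinarith [Real.pi_pos])
  have hk : 0 ≤ k := by positivity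
  calc ‖k • toEuclideanLin (A * B⁻¹) b - k • toEuclideanLin A x'‖
      = k * ‖toEuclideanLin (A * B⁻¹) (b - toEuclideanLin B x')‖ := by
        rw [← smul_sub, toEuclideanLin_mul_inv_sub A hB, norm_smul, Real.norm_of_nonneg hk]
    _ ≤ k * (lammax / (s + lammax) * ‖b - toEuclideanLin B x'‖) := by
        gcongr
        exact hA.norm_toEuclideanLin_mul_inv_smul_one_add_le hs hmax _
    _ ≤ k * (lammax / (s + lammax) * ((ε / (2 * m)) *
          ((α * Real.pi) / Real.sin (α * Real.pi)) * ((1 + s / lammax) / w))) := by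
        gcongr
    _ = ε / (2 * m) := by
        unfold k
        field_simp
        ring

theorem stmt15 {n m : ℕ} (hm : 1 ≤ m) (A : Matrix (Fin n) (Fin n) ℂ) (hA : A.PosDef)
    (lammax : ℝ)
    (hmax : ∀ i, hA.isHermitian.eigenvalues i ≤ lammax)
    (hmem : ∃ i, hA.isHermitian.eigenvalues i = lammax)
    (α : ℝ) (hα : 0 < α) (hα1 : α < 1)
    (t w : ℝ) (ht : 0 ≤ t) (hw : 0 < w)
    (b x' : EuclideanSpace ℂ (Fin n)) (ε : ℝ) (hε : 0 < ε)
    (hres : ‖b - Matrix.toEuclideanLin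
        (((t ^ (1/α) : ℝ) : ℂ) • (1 : Matrix (Fin n) (Fin n) ℂ) + A) x'‖ ≤
      (ε / (2 * m)) * ((α * Real.pi) / Real.sin (α * Real.pi)) *
        ((1 + t ^ (1/α) / lammax) / w)) :
    ‖(Real.sin (α * Real.pi) / (α * Real.pi) * w) •
          Matrix.toEuclideanLin
            (A * (((t ^ (1/α) : ℝ) : ℂ) • (1 : Matrix (Fin n) (Fin n) ℂ) + A)⁻¹) b
        - (Real.sin (α * Real.pi) / (α * Real.pi) * w) • Matrix.toEuclideanLin A x'‖ ≤
      ε / (2 * m) :=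
  stmt15_general A hA lammax hmax hmem α hα hα1 t w ht hw b x' ε hres
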